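/- Let E and F be nonempty closed convex sets in ℝⁿ such that E + F = ℝⁿ and for every u ∈ ℝⁿ the metric projections p_E(u) and p_F(u) are orthogonal, i.e., p_E(u) · p_F(u) = 0. Then E is not contained in the relative boundary of F°, and F is not contained in the relative boundary of E°. -/

import Mathlib

/-
A vector `w` orthogonal to `E` lies in `F`. Indeed, let `z = p_F(w)`. Moving `u` along the normal
ray `z + t • (w - z)` keeps `p_F(u) = z`, and `p_E(u) ⊥ z` then forces `⟪z, e⟫ ≥ 0` on `E`. So
`⟪w - z, ·⟫` is bounded above by `0` on `E` and, by the variational inequality, by `⟪w - z, z⟫`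
on `F`; hence it is bounded above on `E + F = ℝⁿ`, and `w = z ∈ F`.

Consequently `0 ∈ E ∩ F`, `E ⊆ F°`, and `F° ⊆ (Eᗮ)ᗮ = span E = aff E`. Thus `E` and `F°` have
the same affine span, and the nonempty relative interior of `E` lies in the relative interior
of `F°`.
-/

open RealInnerProductSpace Pointwise

/-- The (negative) polar set of `X`. -/
def polarSet {n : ℕ} (X : Set (EuclideanSpace ℝ (Fin n))) : Set (EuclideanSpace ℝ (Fin n)) :=
  {x | ∀ e ∈ X, ⟪x, e⟫ ≤ 0}

/-- The orthogonal complement of a set `X`. -/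
def orthComp {n : ℕ} (X : Set (EuclideanSpace ℝ (Fin n))) : Set (EuclideanSpace ℝ (Fin n)) :=
  {x | ∀ u ∈ X, ⟪x, u⟫ = 0}

/-- `y` is the metric projection of `u` on `E`: it belongs to `E` and is nearest to `u`. -/
def IsMetricProj {n : ℕ} (E : Set (EuclideanSpace ℝ (Fin n)))
    (u y : EuclideanSpace ℝ (Fin n)) : Prop :=
  y ∈ E ∧ ∀ x ∈ E, ‖u - y‖ ≤ ‖u - x‖

open Set Submodule

theorem nonneg_of_forall_nonneg_mul_add {a b : ℝ} (h : ∀ t : ℝ, 0 ≤ t → 0 ≤ a * t + b) :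
    0 ≤ a := by
  by_contra! ha
  have hb := h (-(|b| + 1) / a) (div_nonneg_of_nonpos (neg_nonpos.2 (by positivity)) ha.le)
  rw [mul_div_cancel₀ _ ha.ne] at hb
  linarith [le_abs_self b]

theorem eq_zero_of_forall_inner_le {V : Type*} [NormedAddCommGroup V] [InnerProductSpace ℝ V]
    {d : V} {c : ℝ} (h : ∀ v, ⟪d, v⟫ ≤ c) : d = 0 := by
  have hsq : 0 ≤ -‖d‖ ^ 2 := nonneg_of_forall_nonneg_mul_add (b := c) fun t _ => by
    have := h (t • d)
    rw [real_inner_smul_right, real_inner_self_eq_norm_sq] at this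
    linarith
  rw [← norm_eq_zero]
  nlinarith [norm_nonneg d]

theorem intrinsicInterior_mono_of_affineSpan_eq {𝕜 V P : Type*} [Ring 𝕜] [AddCommGroup V]
    [Module 𝕜 V] [TopologicalSpace P] [AddTorsor V P] {s t : Set P} (hst : s ⊆ t)
    (h : affineSpan 𝕜 s = affineSpan 𝕜 t) : intrinsicInterior 𝕜 s ⊆ intrinsicInterior 𝕜 t := by
  rw [intrinsicInterior, intrinsicInterior, h]
  exact image_mono (interior_mono (preimage_mono hst))

theorem not_subset_intrinsicFrontier_of_affineSpan_eq {V : Type*} [NormedAddCommGroup V]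
    [NormedSpace ℝ V] [FiniteDimensional ℝ V] {s t : Set V} (hs : Convex ℝ s) (hne : s.Nonempty)
    (hst : s ⊆ t) (h : affineSpan ℝ s = affineSpan ℝ t) : ¬ s ⊆ intrinsicFrontier ℝ t := by
  intro hfr
  obtain ⟨x, hx⟩ := hne.intrinsicInterior hs
  have hxt := intrinsicInterior_mono_of_affineSpan_eq hst h hx
  rw [← intrinsicClosure_sdiff_intrinsicFrontier] at hxt
  exact hxt.2 (hfr (intrinsicInterior_subset hx))

section MetricProj

variable {n : ℕ} {E : Set (EuclideanSpace ℝ (Fin n))} {u y : EuclideanSpace ℝ (Fin n)}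

theorem isMetricProj_iff_norm_eq_iInf :
    IsMetricProj E u y ↔ y ∈ E ∧ ‖u - y‖ = ⨅ x : E, ‖u - x‖ := by
  have hbdd : BddBelow (range fun x : E => ‖u - x‖) :=
    ⟨0, forall_mem_range.2 fun _ => norm_nonneg _⟩
  refine ⟨fun h => ⟨h.1, ?_⟩, fun ⟨hy, h⟩ => ⟨hy, fun x hx => h ▸ ciInf_le hbdd ⟨x, hx⟩⟩⟩
  have : Nonempty E := ⟨⟨y, h.1⟩⟩
  exact le_antisymm (le_ciInf fun x => h.2 x x.2) (ciInf_le hbdd ⟨y, h.1⟩)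

theorem isMetricProj_iff (hconv : Convex ℝ E) :
    IsMetricProj E u y ↔ y ∈ E ∧ ∀ x ∈ E, ⟪u - y, x - y⟫ ≤ 0 := by
  rw [isMetricProj_iff_norm_eq_iInf]
  exact and_congr_right (norm_eq_iInf_iff_real_inner_le_zero hconv)

theorem exists_isMetricProj (hne : E.Nonempty) (hcl : IsClosed E) (hconv : Convex ℝ E)
    (u : EuclideanSpace ℝ (Fin n)) : ∃ y, IsMetricProj E u y := by
  obtain ⟨y, hy, h⟩ := exists_norm_eq_iInf_of_complete_convex hne hcl.isComplete hconv u
  exact ⟨y, isMetricProj_iff_norm_eq_iInf.2 ⟨hy, h⟩⟩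

theorem isMetricProj_self (hy : y ∈ E) : IsMetricProj E y y :=
  ⟨hy, fun x _ => by simp⟩

theorem IsMetricProj.inner_sub_nonpos (hconv : Convex ℝ E) (h : IsMetricProj E u y) :
    ∀ x ∈ E, ⟪u - y, x - y⟫ ≤ 0 :=
  ((isMetricProj_iff hconv).1 h).2

theorem IsMetricProj.add_smul_sub (hconv : Convex ℝ E) (h : IsMetricProj E u y) {t : ℝ}
    (ht : 0 ≤ t) : IsMetricProj E (y + t • (u - y)) y := by
  refine (isMetricProj_iff hconv).2 ⟨h.1, fun x hx => ?_⟩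
  rw [add_sub_cancel_left, real_inner_smul_left]
  exact mul_nonpos_of_nonneg_of_nonpos ht (h.inner_sub_nonpos hconv x hx)

end MetricProj

section OrthogonalProjections

variable {n : ℕ} {E F : Set (EuclideanSpace ℝ (Fin n))}

theorem inner_nonneg_of_isMetricProj_of_forall_inner_eq_zero
    (hEne : E.Nonempty) (hEcl : IsClosed E) (hEconv : Convex ℝ E) (hFconv : Convex ℝ F)
    (horth : ∀ u y z : EuclideanSpace ℝ (Fin n),
      IsMetricProj E u y → IsMetricProj F u z → ⟪y, z⟫ = 0)
    {w z x : EuclideanSpace ℝ (Fin n)} (hw : ∀ e ∈ E, ⟪w, e⟫ = 0) (hz : IsMetricProj F w z)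
    (hx : x ∈ E) : 0 ≤ ⟪z, x⟫ := by
  have h2 : 0 ≤ 2 * ⟪z, x⟫ := nonneg_of_forall_nonneg_mul_add
    (b := ‖x‖ ^ 2 - 2 * ⟪z, x⟫) fun t ht => by
    set u := z + t • (w - z)
    obtain ⟨y, hy⟩ := exists_isMetricProj hEne hEcl hEconv u
    have hzy : ⟪z, y⟫ = 0 := by
      rw [real_inner_comm]
      exact horth u y z hy (hz.add_smul_sub hFconv ht)
    have huy : ⟪u, y⟫ = 0 := by
      simp only [u, inner_add_left, real_inner_smul_left, inner_sub_left, hw y hy.1, hzy]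
      ring
    have hux : ⟪u, x⟫ = (1 - t) * ⟪z, x⟫ := by
      simp only [u, inner_add_left, real_inner_smul_left, inner_sub_left, hw x hx]
      ring
    have hdist : ‖u - y‖ ^ 2 ≤ ‖u - x‖ ^ 2 := pow_le_pow_left₀ (norm_nonneg _) (hy.2 x hx) 2
    rw [norm_sub_sq_real, norm_sub_sq_real, huy, hux] at hdist
    nlinarith [sq_nonneg ‖y‖]
  linarith

theorem mem_of_forall_inner_eq_zero
    (hEne : E.Nonempty) (hEcl : IsClosed E) (hEconv : Convex ℝ E)
    (hFne : F.Nonempty) (hFcl : IsClosed F) (hFconv : Convex ℝ F)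
    (hsum : E + F = univ)
    (horth : ∀ u y z : EuclideanSpace ℝ (Fin n),
      IsMetricProj E u y → IsMetricProj F u z → ⟪y, z⟫ = 0)
    {w : EuclideanSpace ℝ (Fin n)} (hw : ∀ e ∈ E, ⟪w, e⟫ = 0) : w ∈ F := by
  obtain ⟨z, hz⟩ := exists_isMetricProj hFne hFcl hFconv w
  suffices w - z = 0 from sub_eq_zero.1 this ▸ hz.1
  refine eq_zero_of_forall_inner_le (c := ⟪w - z, z⟫) fun v => ?_
  obtain ⟨e, he, f, hf, rfl⟩ := mem_add.1 (hsum ▸ mem_univ v)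
  have hE : ⟪w - z, e⟫ ≤ 0 := by
    rw [inner_sub_left, hw e he, zero_sub, neg_nonpos]
    exact inner_nonneg_of_isMetricProj_of_forall_inner_eq_zero hEne hEcl hEconv hFconv horth
      hw hz he
  have hF : ⟪w - z, f⟫ ≤ ⟪w - z, z⟫ := by
    have := hz.inner_sub_nonpos hFconv f hf
    rw [inner_sub_right] at this
    linarith
  rw [inner_add_right]
  linarith

theorem subset_polarSet (hFcl : IsClosed F) (hFconv : Convex ℝ F) (h0F : 0 ∈ F)
    (horth : ∀ u y z : EuclideanSpace ℝ (Fin n),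
      IsMetricProj E u y → IsMetricProj F u z → ⟪y, z⟫ = 0) :
    E ⊆ polarSet F := by
  intro e he f hf
  obtain ⟨z, hz⟩ := exists_isMetricProj ⟨0, h0F⟩ hFcl hFconv e
  have hez : ⟪e, z⟫ = 0 := horth e e z (isMetricProj_self he) hz
  have hz0 : z = 0 := by
    have hdist : ‖e - z‖ ^ 2 ≤ ‖e - 0‖ ^ 2 := pow_le_pow_left₀ (norm_nonneg _) (hz.2 0 h0F) 2
    rw [norm_sub_sq_real, hez, sub_zero] at hdist
    rw [← norm_eq_zero]
    nlinarith [norm_nonneg z]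
  simpa [hz0] using hz.inner_sub_nonpos hFconv f hf

theorem polarSet_subset_span
    (hEne : E.Nonempty) (hEcl : IsClosed E) (hEconv : Convex ℝ E)
    (hFne : F.Nonempty) (hFcl : IsClosed F) (hFconv : Convex ℝ F)
    (hsum : E + F = univ)
    (horth : ∀ u y z : EuclideanSpace ℝ (Fin n),
      IsMetricProj E u y → IsMetricProj F u z → ⟪y, z⟫ = 0) :
    polarSet F ⊆ span ℝ E := by
  intro x hx
  rw [SetLike.mem_coe, ← (span ℝ E).orthogonal_orthogonal, mem_orthogonal']
  intro w hw
  have hwE : ∀ e ∈ E, ⟪w, e⟫ = 0 := fun e he => (mem_orthogonal' _ _).1 hw e (subset_span he)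
  have hwF := mem_of_forall_inner_eq_zero hEne hEcl hEconv hFne hFcl hFconv hsum horth hwE
  have hnegwF := mem_of_forall_inner_eq_zero hEne hEcl hEconv hFne hFcl hFconv hsum horth
    (w := -w) fun e he => by rw [inner_neg_left, hwE e he, neg_zero]
  have := hx (-w) hnegwF
  rw [inner_neg_right] at this
  exact le_antisymm (hx w hwF) (by linarith)

theorem not_subset_intrinsicFrontier_polarSet
    (hEne : E.Nonempty) (hEcl : IsClosed E) (hEconv : Convex ℝ E)
    (hFne : F.Nonempty) (hFcl : IsClosed F) (hFconv : Convex ℝ F)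
    (hsum : E + F = univ)
    (horth : ∀ u y z : EuclideanSpace ℝ (Fin n),
      IsMetricProj E u y → IsMetricProj F u z → ⟪y, z⟫ = 0)
    (h0E : 0 ∈ E) : ¬ E ⊆ intrinsicFrontier ℝ (polarSet F) := by
  have h0F : 0 ∈ F := mem_of_forall_inner_eq_zero hEne hEcl hEconv hFne hFcl hFconv hsum horth
    fun e _ => inner_zero_left e
  have hEK := subset_polarSet hFcl hFconv h0F horth
  have hKE : polarSet F ⊆ affineSpan ℝ E := by
    rw [← insert_eq_of_mem h0E, affineSpan_insert_zero]
    exact polarSet_subset_span hEne hEcl hEconv hFne hFcl hFconv hsum horth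
  refine not_subset_intrinsicFrontier_of_affineSpan_eq hEconv hEne hEK ?_
  exact le_antisymm (affineSpan_mono ℝ hEK) (affineSpan_le.2 hKE)

end OrthogonalProjections

theorem not_subset_relative_boundary_of_polar
(n : ℕ) (E F : Set (EuclideanSpace ℝ (Fin n)))
    (hEne : E.Nonempty) (hEcl : IsClosed E) (hEconv : Convex ℝ E)
    (hFne : F.Nonempty) (hFcl : IsClosed F) (hFconv : Convex ℝ F)
    (hsum : E + F = Set.univ)
    (horth : ∀ u y z : EuclideanSpace ℝ (Fin n),
      IsMetricProj E u y → IsMetricProj F u z → ⟪y, z⟫ = 0) :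
    ¬ E ⊆ intrinsicFrontier ℝ (polarSet F) ∧
      ¬ F ⊆ intrinsicFrontier ℝ (polarSet E) := by
  have hsum' : F + E = Set.univ := by rwa [add_comm]
  have horth' : ∀ u y z : EuclideanSpace ℝ (Fin n),
      IsMetricProj F u y → IsMetricProj E u z → ⟪y, z⟫ = 0 := fun u y z hy hz => by
    rw [real_inner_comm]
    exact horth u z y hz hy
  have h0E : 0 ∈ E := mem_of_forall_inner_eq_zero hFne hFcl hFconv hEne hEcl hEconv hsum' horth'
    fun f _ => inner_zero_left f
  have h0F : 0 ∈ F := mem_of_forall_inner_eq_zero hEne hEcl hEconv hFne hFcl hFconv hsum horth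
    fun e _ => inner_zero_left e
  exact ⟨not_subset_intrinsicFrontier_polarSet hEne hEcl hEconv hFne hFcl hFconv hsum horth h0E,
    not_subset_intrinsicFrontier_polarSet hFne hFcl hFconv hEne hEcl hEconv hsum' horth' h0F⟩
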